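/- There exist finite sets S_t ⊂ ℤ^d (t ∈ ℤ₊) with S_0 = {0}, and a family of nearest-neighbor paths {γ_{t,x} : t ∈ ℤ₊, x ∈ S_t} with γ_{t,x}(0) = 0 and γ_{t,x}(t) = x, such that, defining for t′ ≥ t and x ∈ ℤ^d the multiplicity n_{t′}(t,x) = #{y ∈ S_{t′} : γ_{t′,y}(t) = x}, the following hold: (1) for all t′ ≥ 1 and all t ≤ t′, n_{t′}(t,x) ≤ (4+4d)^d · (t′/(1+t))^d; (2) for all t ≥ 0, |S_t| ≥ (2d)^{−d}(t+d)^d; (3) consequently, for all 1 ≤ t ≤ t′, n_{t′}(t,x)/|S_{t′}| ≤ (4d)^{2d}/(1+t)^d. -/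

import Mathlib

open MeasureTheory ProbabilityTheory Filter
open scoped Classical ENNReal NNReal

noncomputable section

/-- The set of `ℓ¹`-unit vectors in `ℤ^d`, i.e. the possible increments of a
simple nearest-neighbor walk. -/
def unitVecs (d : ℕ) : Finset (Fin d → ℤ) :=
  Finset.image (fun p : Fin d × Bool =>
    fun j => if j = p.1 then (if p.2 then 1 else -1) else 0) Finset.univ

/-- Nearest-neighbor paths of length `T` started at `0`, encoded by their increments. -/
def pathSet (d T : ℕ) : Finset (Fin T → (Fin d → ℤ)) :=
  Fintype.piFinset fun _ => unitVecs d

/-- The position at time `t` of the path started at `0` with increments `ε`. -/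
def pathPos {d T : ℕ} (ε : Fin T → (Fin d → ℤ)) (t : ℕ) : Fin d → ℤ :=
  ∑ s ∈ Finset.univ.filter (fun s : Fin T => (s : ℕ) < t), ε s

/-- The `ℓ¹`-norm on `ℤ^d`. -/
def norm1 {d : ℕ} (x : Fin d → ℤ) : ℤ := ∑ i, |x i|

variable {Ω : Type*} [MeasurableSpace Ω]

/-- The energy `H_γ(T) = ∑_{t<T} V(t, γ(t))` of the path with increments `ε`. -/
def Hpath {d : ℕ} (V : ℕ → (Fin d → ℤ) → Ω → ℝ) {T : ℕ}
    (ε : Fin T → (Fin d → ℤ)) (ω : Ω) : ℝ :=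
  ∑ t : Fin T, V t (pathPos ε t) ω

/-- The partition function `Z(T) = E_0[exp H_γ(T)]` of the directed polymer. -/
def Zpart (d : ℕ) (V : ℕ → (Fin d → ℤ) → Ω → ℝ) (T : ℕ) (ω : Ω) : ℝ :=
  ((2 * d : ℝ))⁻¹ ^ T * ∑ ε ∈ pathSet d T, Real.exp (Hpath V ε ω)

/-- `ζ(T) = sup_γ H_γ(T)`, the oriented last-passage time. -/
def zetaFn (d : ℕ) (V : ℕ → (Fin d → ℤ) → Ω → ℝ) (T : ℕ) (ω : Ω) : ℝ :=
  sSup ((fun ε => Hpath V ε ω) '' (pathSet d T : Set (Fin T → (Fin d → ℤ))))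

/-- The partition function restricted to paths staying in the ball of radius `W`. -/
def Zrestr (d : ℕ) (V : ℕ → (Fin d → ℤ) → Ω → ℝ) (W T : ℕ) (ω : Ω) : ℝ :=
  ((2 * d : ℝ))⁻¹ ^ T * ∑ ε ∈ pathSet d T,
    if ∀ s ≤ T, norm1 (pathPos ε s) ≤ (W : ℤ) then Real.exp (Hpath V ε ω) else 0

/-- The partition function restricted to paths staying in the ball of radius `W`
and returning to `0` at time `L`. -/
def ZrestrLoop (d : ℕ) (V : ℕ → (Fin d → ℤ) → Ω → ℝ) (W L : ℕ) (ω : Ω) : ℝ :=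
  ((2 * d : ℝ))⁻¹ ^ L * ∑ ε ∈ pathSet d L,
    if pathPos ε L = 0 ∧ ∀ s ≤ L, norm1 (pathPos ε s) ≤ (W : ℤ) then
      Real.exp (Hpath V ε ω) else 0

/-- `V` is an IID field under `Q`. -/
def IIDField (d : ℕ) (V : ℕ → (Fin d → ℤ) → Ω → ℝ) (Q : Measure Ω) : Prop :=
  (∀ t x, Measurable (V t x)) ∧
  iIndepFun (m := fun _ => Real.measurableSpace) (fun p : ℕ × (Fin d → ℤ) => V p.1 p.2) Q ∧
  ∀ p : ℕ × (Fin d → ℤ), IdentDistrib (V p.1 p.2) (V 0 0) Q Q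

/-- (AS0): `V(0,0)` is non-degenerate. -/
def NonDeg (V00 : Ω → ℝ) (Q : Measure Ω) : Prop :=
  ¬ ∃ c : ℝ, ∀ᵐ ω ∂Q, V00 ω = c

/-- (AS1): `V(0,0)` is centered. -/
def Centered (V00 : Ω → ℝ) (Q : Measure Ω) : Prop :=
  ∫ ω, V00 ω ∂Q = 0

/-- (AS2): finite exponential moments of both signs near `0`. -/
def ExpMoments (V00 : Ω → ℝ) (Q : Measure Ω) : Prop :=
  ∃ η > (0 : ℝ), ∀ η' : ℝ, |η'| < η → Integrable (fun ω => Real.exp (η' * V00 ω)) Q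

/-- The regularity assumptions on `G` in (AS3): `G : ℝ₊ → ℝ₊` is continuous,
strictly increasing, vanishes at `0` and tends to `∞`. -/
def GoodG (G : ℝ → ℝ) : Prop :=
  G 0 = 0 ∧ StrictMonoOn G (Set.Ici 0) ∧ ContinuousOn G (Set.Ici 0) ∧
    (∀ x ≥ (0:ℝ), 0 ≤ G x) ∧ Tendsto G atTop atTop

/-- (AS3): the negative tail of `V(0,0)` is `exp(-x G(x))` for `x ≥ x̄`. -/
def TailG (V00 : Ω → ℝ) (Q : Measure Ω) (G : ℝ → ℝ) (xb : ℝ) : Prop :=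
  ∀ x ≥ xb, (Q {ω | x < - V00 ω}).toReal = Real.exp (-(x * G x))

/-- `Ginv` is the inverse of `G` on `ℝ₊`. -/
def GinvSpec (G Ginv : ℝ → ℝ) : Prop :=
  (∀ x ≥ (0:ℝ), Ginv (G x) = x) ∧ ∀ y ≥ (0:ℝ), 0 ≤ Ginv y ∧ G (Ginv y) = y

/-- `F(z) = z^{1/d} ∫_{G^inv(1)}^{G^inv(z)} G(x)^{-1/d} dx`. -/
def Ffun (d : ℕ) (G Ginv : ℝ → ℝ) (z : ℝ) : ℝ :=
  z ^ ((d : ℝ)⁻¹) * ∫ x in (Ginv 1)..(Ginv z), (G x) ^ (-(d : ℝ)⁻¹)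

/-- `I_η^M(T) = ∑_{t=0}^{M(T)-1} G^inv(η(T)/(1+t)^d)`. -/
def Ifun (d : ℕ) (Ginv : ℝ → ℝ) (η : ℕ → ℝ) (M : ℕ → ℕ) (T : ℕ) : ℝ :=
  ∑ t ∈ Finset.range (M T), Ginv (η T / (1 + (t : ℝ)) ^ d)

/-- `F_η^M(T) = η(T)^{1/d} ∫_{G^inv(η(T)/M(T)^d)}^{G^inv(η(T))} G(x)^{-1/d} dx`. -/
def FfunM (d : ℕ) (G Ginv : ℝ → ℝ) (η : ℕ → ℝ) (M : ℕ → ℕ) (T : ℕ) : ℝ :=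
  (η T) ^ ((d : ℝ)⁻¹) *
    ∫ x in (Ginv (η T / (M T : ℝ) ^ d))..(Ginv (η T)), (G x) ^ (-(d : ℝ)⁻¹)

/-- The free energy: `(1/T) ln Z(T) → λ` a.s., with `λ ≥ 0`. -/
def FreeEnergy (d : ℕ) (V : ℕ → (Fin d → ℤ) → Ω → ℝ) (Q : Measure Ω) (lam : ℝ) : Prop :=
  0 ≤ lam ∧
    ∀ᵐ ω ∂Q, Tendsto (fun T : ℕ => (T : ℝ)⁻¹ * Real.log (Zpart d V T ω)) atTop (nhds lam)

/-- The rate of the lower tail of the large deviations: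
`R_ε(T) = - ln Q(Z(T) ≤ e^{(λ-ε)T})`. -/
def Rate (d : ℕ) (V : ℕ → (Fin d → ℤ) → Ω → ℝ) (Q : Measure Ω) (lam ε : ℝ) (T : ℕ) : ℝ :=
  - Real.log ((Q {ω | Zpart d V T ω ≤ Real.exp ((lam - ε) * T)}).toReal)

/-- `q ∼ r`: `0 < liminf q/r ≤ limsup q/r < ∞`, i.e. `q` and `r` are comparable
up to multiplicative constants, eventually. -/
def Asymp (q r : ℕ → ℝ) : Prop :=
  ∃ c C : ℝ, 0 < c ∧ ∀ᶠ T in atTop, c * r T ≤ q T ∧ q T ≤ C * r T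

/-- `q ∼ r` for functions of a real variable. -/
def AsympR (q r : ℝ → ℝ) : Prop :=
  ∃ c C : ℝ, 0 < c ∧ ∀ᶠ x in atTop, c * r x ≤ q x ∧ q x ≤ C * r x

end

namespace PFaux

def cnt (d i t : ℕ) : ℕ := ((Finset.range t).filter (fun s => s % d = i)).card

lemma cnt_zero (d i : ℕ) : cnt d i 0 = 0 := by simp [cnt]

lemma cnt_succ (d i s : ℕ) :
    cnt d i (s+1) = cnt d i s + (if s % d = i then 1 else 0) := by
  unfold cnt
  rw [Finset.range_add_one, Finset.filter_insert]
  split_ifs with h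
  · rw [Finset.card_insert_of_notMem (by simp)]
  · simp

lemma cnt_mono (d i : ℕ) {t t' : ℕ} (h : t ≤ t') : cnt d i t ≤ cnt d i t' :=
  Finset.card_le_card (Finset.filter_subset_filter _ (Finset.range_subset_range.2 h))

lemma cnt_le_self (d i t : ℕ) : cnt d i t ≤ t :=
  le_trans (Finset.card_le_card (Finset.filter_subset _ _)) (le_of_eq (Finset.card_range t))

lemma cnt_eq_image (d i t : ℕ) (hi : i < d) :
    (Finset.range t).filter (fun s => s % d = i)
      = ((Finset.range t).filter (fun k => i + k * d < t)).image (fun k => i + k * d) := by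
  ext s
  simp only [Finset.mem_image, Finset.mem_filter, Finset.mem_range]
  constructor
  · rintro ⟨hs, hmod⟩
    have hdm := Nat.div_add_mod s d
    have hcomm : s / d * d = d * (s / d) := Nat.mul_comm _ _
    refine ⟨s / d, ⟨lt_of_le_of_lt (Nat.div_le_self s d) hs, by omega⟩, by omega⟩
  · rintro ⟨k, ⟨_, hk⟩, rfl⟩
    exact ⟨hk, by simp [Nat.add_mul_mod_self_right, Nat.mod_eq_of_lt hi]⟩

lemma cnt_card_eq (d i t : ℕ) (hd : 0 < d) (hi : i < d) :
    cnt d i t = ((Finset.range t).filter (fun k => i + k * d < t)).card := by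
  rw [cnt, cnt_eq_image d i t hi, Finset.card_image_of_injective]
  intro a b hab
  have hab' : i + a * d = i + b * d := hab
  have : a * d = b * d := by omega
  exact Nat.eq_of_mul_eq_mul_right hd this

lemma cnt_upper (d i t : ℕ) (hd : 0 < d) (hi : i < d) : d * cnt d i t < t + d := by
  rcases Nat.eq_zero_or_pos t with rfl | ht
  · simpa [cnt_zero] using hd
  rw [cnt_card_eq d i t hd hi]
  have hsub : (Finset.range t).filter (fun k => i + k * d < t) ⊆ Finset.range ((t-1)/d + 1) := by
    intro k hk
    simp only [Finset.mem_filter, Finset.mem_range] at hk ⊢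
    have : k * d ≤ t - 1 := by omega
    have := (Nat.le_div_iff_mul_le hd).2 this
    omega
  have hcard := Finset.card_le_card hsub
  rw [Finset.card_range] at hcard
  have h1 : d * ((t-1)/d + 1) ≤ (t-1) + d := by
    have := Nat.div_mul_le_self (t-1) d
    have h2 : d * ((t-1)/d) = (t-1)/d * d := Nat.mul_comm _ _
    have h2' : d * ((t-1)/d + 1) = d * ((t-1)/d) + d := by ring
    omega
  have h3 : d * ((Finset.range t).filter (fun k => i + k * d < t)).card ≤ d * ((t-1)/d + 1) :=
    Nat.mul_le_mul_left d hcard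
  omega

lemma cnt_lower (d i t : ℕ) (hd : 0 < d) (hi : i < d) (hit : i < t) :
    t ≤ i + d * cnt d i t := by
  rw [cnt_card_eq d i t hd hi]
  set a := t - i - 1 with ha
  have hsub : Finset.range (a / d + 1) ⊆ (Finset.range t).filter (fun k => i + k * d < t) := by
    intro k hk
    simp only [Finset.mem_range] at hk
    have hk' : k ≤ a / d := by omega
    have h1 : k * d ≤ a := (Nat.le_div_iff_mul_le hd).1 hk'
    have h2 : k ≤ k * d := Nat.le_mul_of_pos_right k hd
    simp only [Finset.mem_filter, Finset.mem_range]
    omega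
  have hcard := Finset.card_le_card hsub
  rw [Finset.card_range] at hcard
  have h5 : d * (a / d + 1) ≤ d * ((Finset.range t).filter (fun k => i + k * d < t)).card :=
    Nat.mul_le_mul_left d hcard
  have h6 := Nat.div_add_mod a d
  have h7 : a % d < d := Nat.mod_lt _ hd
  have h8 : d * (a / d + 1) = d * (a / d) + d := by ring
  omega

lemma cnt_pos_imp (d i t : ℕ) (h : 1 ≤ cnt d i t) : i < t := by
  by_contra hc
  push_neg at hc
  have : ((Finset.range t).filter (fun s => s % d = i)) = ∅ := by
    refine Finset.filter_eq_empty_iff.2 ?_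
    intro s hs
    have hs' := Finset.mem_range.1 hs
    have : s % d ≤ s := Nat.mod_le s d
    omega
  rw [cnt, this] at h
  simp at h

def pOne (x : ℤ) (m : ℕ) : ℕ → ℤ
  | 0 => 0
  | c+1 => if pOne x m c * m ≤ x * ((c : ℤ)+1) then pOne x m c + 1 else pOne x m c - 1

lemma pOne_step (x : ℤ) (m : ℕ) (c : ℕ) :
    pOne x m (c+1) = pOne x m c + 1 ∨ pOne x m (c+1) = pOne x m c - 1 := by
  rw [pOne]; split_ifs <;> simp

lemma pOne_parity (x : ℤ) (m : ℕ) (c : ℕ) : pOne x m c % 2 = (c : ℤ) % 2 := by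
  induction c with
  | zero => simp [pOne]
  | succ c ih => rcases pOne_step x m c with h | h <;> rw [h] <;> push_cast <;> omega

lemma pOne_bound (x : ℤ) (m : ℕ) (hx1 : -(m:ℤ) ≤ x) (hx2 : x ≤ m) (c : ℕ) :
    -(m:ℤ) ≤ pOne x m c * m - x * c ∧ pOne x m c * m - x * c ≤ m := by
  induction c with
  | zero => simp [pOne]
  | succ c ih =>
    rw [pOne]
    split_ifs with h
    · push_cast at h ⊢
      constructor <;> nlinarith [ih.1, ih.2]
    · push_cast at h ⊢
      constructor <;> nlinarith [ih.1, ih.2]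

lemma pOne_last (x : ℤ) (m : ℕ) (hx1 : -(m:ℤ) ≤ x) (hx2 : x ≤ m)
    (hp : x % 2 = (m:ℤ) % 2) : pOne x m m = x := by
  rcases Nat.eq_zero_or_pos m with rfl | hm
  · have : x = 0 := by simpa using le_antisymm hx2 (by simpa using hx1)
    simp [this, pOne]
  · have hb := pOne_bound x m hx1 hx2 m
    have hpar := pOne_parity x m m
    have hm' : (0:ℤ) < m := by exact_mod_cast hm
    set p := pOne x m m with hpd
    have h1 : (p - x) * (m:ℤ) ≤ m := by nlinarith [hb.2]
    have h2 : -(m:ℤ) ≤ (p - x) * m := by nlinarith [hb.1]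
    have h3 : p - x ≤ 1 := by nlinarith
    have h4 : -1 ≤ p - x := by nlinarith
    omega

noncomputable def coordSet (m : ℕ) : Finset ℤ :=
  (Finset.Icc (-(m:ℤ)) m).filter (fun y => y % 2 = (m:ℤ) % 2)

lemma coordSet_eq (m : ℕ) :
    coordSet m = (Finset.range (m+1)).image (fun k : ℕ => 2*(k:ℤ) - m) := by
  ext y
  simp only [coordSet, Finset.mem_filter, Finset.mem_Icc, Finset.mem_image, Finset.mem_range]
  constructor
  · rintro ⟨⟨h1, h2⟩, h3⟩
    refine ⟨((y + m)/2).toNat, ?_, ?_⟩ <;> omega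
  · rintro ⟨k, hk, rfl⟩
    omega

lemma coordSet_card (m : ℕ) : (coordSet m).card = m + 1 := by
  rw [coordSet_eq, Finset.card_image_of_injective, Finset.card_range]
  intro a b hab
  have hab' : 2*(a:ℤ) - m = 2*(b:ℤ) - m := hab
  omega

lemma mem_coordSet {m : ℕ} {y : ℤ} :
    y ∈ coordSet m ↔ (-(m:ℤ) ≤ y ∧ y ≤ m ∧ y % 2 = (m:ℤ) % 2) := by
  simp only [coordSet, Finset.mem_filter, Finset.mem_Icc]; tauto

lemma coord_count (m c : ℕ) (hc : 1 ≤ c) (x : ℤ) :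
    ((coordSet m).filter (fun z => pOne z m c = x)).card ≤ m / c + 1 := by
  set A := (coordSet m).filter (fun z => pOne z m c = x) with hA
  rcases Finset.eq_empty_or_nonempty A with h | h
  · simp [h]
  set a := A.min' h with ha
  have haA : a ∈ A := A.min'_mem h
  have key : ∀ z ∈ A, a ≤ z ∧ z % 2 = a % 2 ∧ (z - a) * c ≤ 2 * m := by
    intro z hz
    have h1 := A.min'_le z hz
    obtain ⟨hz1, hz2⟩ := Finset.mem_filter.1 hz
    obtain ⟨ha1, ha2⟩ := Finset.mem_filter.1 haA
    rw [mem_coordSet] at hz1 ha1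
    have hbz := pOne_bound z m hz1.1 hz1.2.1 c
    have hba := pOne_bound a m ha1.1 ha1.2.1 c
    rw [hz2] at hbz; rw [ha2] at hba
    refine ⟨h1, by omega, ?_⟩
    nlinarith [hbz.1, hbz.2, hba.1, hba.2]
  have hmaps : ∀ z ∈ A, ((z - a) / 2).toNat ∈ Finset.range (m / c + 1) := by
    intro z hz
    obtain ⟨h1, h2, h3⟩ := key z hz
    simp only [Finset.mem_range]
    set k := ((z - a) / 2).toNat with hk
    have hzk : z - a = 2 * (k : ℤ) := by omega
    have h4 : (k : ℤ) * c ≤ m := by rw [hzk] at h3; push_cast at h3 ⊢; nlinarith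
    have h5 : k * c ≤ m := by exact_mod_cast h4
    have := (Nat.le_div_iff_mul_le hc).2 h5
    omega
  have hinj : Set.InjOn (fun z => ((z - a) / 2).toNat) A := by
    intro z hz w hw hzw
    obtain ⟨h1, h2, -⟩ := key z hz
    obtain ⟨h1', h2', -⟩ := key w hw
    simp only at hzw
    omega
  have := Finset.card_le_card_of_injOn _ hmaps hinj
  simpa using this

noncomputable def SF (d t : ℕ) : Finset (Fin d → ℤ) := Fintype.piFinset (fun i => coordSet (cnt d i t))

def gF (d t' : ℕ) (y : Fin d → ℤ) (s : ℕ) : Fin d → ℤ :=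
  fun i => pOne (y i) (cnt d i t') (cnt d i s)

set_option maxHeartbeats 1000000 in
lemma coord_real_bound (d : ℕ) (hd : 1 ≤ d) (t t' : ℕ) (ht' : 1 ≤ t') (htt : t ≤ t')
    (i : Fin d) (x : ℤ) :
    (((coordSet (cnt d (i:ℕ) t')).filter
        (fun z => pOne z (cnt d (i:ℕ) t') (cnt d (i:ℕ) t) = x)).card : ℝ)
      ≤ (4 + 4 * d) * ((t' : ℝ) / (1 + t)) := by
  have hd0 : 0 < d := hd
  have hi : (i:ℕ) < d := i.isLt
  set m := cnt d (i:ℕ) t' with hm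
  set c := cnt d (i:ℕ) t with hc
  have h1t : (0:ℝ) < 1 + (t:ℝ) := by positivity
  have ht1R : (1:ℝ) ≤ (t':ℝ) := by exact_mod_cast ht'
  have httR : (t:ℝ) ≤ (t':ℝ) := by exact_mod_cast htt
  have hdR : (1:ℝ) ≤ (d:ℝ) := by exact_mod_cast hd
  have hmub : d * m < t' + d := cnt_upper d (i:ℕ) t' hd0 hi
  have hmubR : (d:ℝ) * m + 1 ≤ (t':ℝ) + d := by exact_mod_cast hmub
  have hrhs : (4 + 4 * (d:ℝ)) * ((t' : ℝ) / (1 + t)) = (4 + 4*(d:ℝ)) * t' / (1+t) :=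
    (mul_div_assoc _ _ _).symm
  rcases Nat.eq_zero_or_pos c with hc0 | hc1
  · -- c = 0, so t ≤ i ≤ d - 1
    have hti : t ≤ (i:ℕ) := by
      by_contra hcon
      push_neg at hcon
      have h9 := cnt_lower d (i:ℕ) t hd0 hi hcon
      rw [← hc, hc0, Nat.mul_zero, Nat.add_zero] at h9
      omega
    have hcard : ((coordSet m).filter (fun z => pOne z m c = x)).card ≤ m + 1 :=
      le_trans (Finset.card_le_card (Finset.filter_subset _ _)) (le_of_eq (coordSet_card m))
    have hmt' : m ≤ t' := cnt_le_self d (i:ℕ) t'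
    have hmt'R : (m:ℝ) ≤ t' := by exact_mod_cast hmt'
    have htd : (t:ℝ) + 1 ≤ d := by
      have : t + 1 ≤ d := by omega
      exact_mod_cast this
    calc (((coordSet m).filter (fun z => pOne z m c = x)).card : ℝ)
        ≤ (m:ℝ) + 1 := by exact_mod_cast hcard
      _ ≤ (4 + 4 * d) * ((t' : ℝ) / (1 + t)) := by
          rw [hrhs, le_div_iff₀ h1t]
          have hAB : ((m:ℝ) + 1) * (1 + t) ≤ ((t':ℝ) + 1) * d :=
            mul_le_mul (by linarith) (by linarith) (by positivity) (by positivity)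
          nlinarith [hAB, mul_le_mul_of_nonneg_right ht1R (by positivity : (0:ℝ) ≤ (d:ℝ))]
  · -- c ≥ 1
    have hcnt := coord_count m c hc1 x
    have hcR : (0:ℝ) < (c:ℝ) := by exact_mod_cast hc1
    have hc1R : (1:ℝ) ≤ (c:ℝ) := by exact_mod_cast hc1
    have hdivle : ((m / c : ℕ) : ℝ) ≤ (m:ℝ)/(c:ℝ) := Nat.cast_div_le
    have hcm : c ≤ m := cnt_mono d (i:ℕ) htt
    have hcmR : (c:ℝ) ≤ m := by exact_mod_cast hcm
    have hit : (i:ℕ) < t := cnt_pos_imp d (i:ℕ) t hc1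
    have hlow : t ≤ (i:ℕ) + d * c := cnt_lower d (i:ℕ) t hd0 hi hit
    have hl2 : t + 1 ≤ d + d * c := by
      calc t + 1 ≤ ((i:ℕ) + d*c) + 1 := Nat.succ_le_succ hlow
        _ = ((i:ℕ)+1) + d*c := by ring
        _ ≤ d + d*c := Nat.add_le_add_right hi (d*c)
    have hlowR : (t:ℝ) + 1 ≤ (d:ℝ) + (d:ℝ)*(c:ℝ) := by exact_mod_cast hl2
    have key : ((m:ℝ) + c) * (1+t) ≤ (4 + 4*(d:ℝ)) * t' * c := by
      rcases le_or_gt (t:ℝ) (2*d) with hcase | hcase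
      · have hmt'R : (m:ℝ) ≤ t' := by nlinarith [hmubR, hdR, ht1R]
        have hA : (m:ℝ) + c ≤ 2*t' := by linarith
        have hB : 1+(t:ℝ) ≤ 1+2*d := by linarith
        have h1 : ((m:ℝ)+c)*(1+t) ≤ (2*t')*(1+2*d) :=
          mul_le_mul hA hB (by positivity) (by positivity)
        have h2 : (4+4*(d:ℝ))*t' * 1 ≤ (4+4*(d:ℝ))*t' * c :=
          mul_le_mul_of_nonneg_left hc1R (by positivity)
        linarith [h1, h2]
      · have hdmR : (d:ℝ)*m ≤ 2*t' := by linarith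
        have hd_dc : (d:ℝ)*1 ≤ (d:ℝ)*c := mul_le_mul_of_nonneg_left hc1R (by positivity)
        have hAA : 1+(t:ℝ) ≤ 2*((d:ℝ)*c) := by linarith
        have h1 : (m:ℝ)*(1+t) ≤ (m:ℝ)*(2*((d:ℝ)*c)) :=
          mul_le_mul_of_nonneg_left hAA (by positivity)
        have h2 : (d:ℝ)*m*c ≤ (2*t')*c := mul_le_mul_of_nonneg_right hdmR (by positivity)
        have h3 : (c:ℝ)*(1+t) ≤ (c:ℝ)*(2*t') :=
          mul_le_mul_of_nonneg_left (by linarith) (by positivity)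
        have h4 : (0:ℝ) ≤ (4*(d:ℝ)-2)*((t':ℝ)*c) :=
          mul_nonneg (by linarith) (by positivity)
        nlinarith [h1, h2, h3, h4]
    calc (((coordSet m).filter (fun z => pOne z m c = x)).card : ℝ)
        ≤ ((m / c + 1 : ℕ) : ℝ) := by exact_mod_cast hcnt
      _ ≤ (m:ℝ)/c + 1 := by push_cast; linarith [hdivle]
      _ = ((m:ℝ) + c)/c := by rw [add_div, div_self hcR.ne']
      _ ≤ (4 + 4 * d) * ((t' : ℝ) / (1 + t)) := by
          rw [hrhs, div_le_div_iff₀ hcR h1t]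
          exact key

lemma SF_card (d t : ℕ) : (SF d t).card = ∏ i : Fin d, (cnt d i t + 1) := by
  rw [SF, Fintype.card_piFinset]
  simp [coordSet_card]

lemma SF_zero (d : ℕ) : SF d 0 = ({0} : Finset (Fin d → ℤ)) := by
  ext y
  simp only [SF, Fintype.mem_piFinset, Finset.mem_singleton]
  constructor
  · intro h
    funext i
    have := mem_coordSet.1 (h i)
    rw [cnt_zero] at this
    have : y i = 0 := by push_cast at this; omega
    simpa using this
  · rintro rfl i
    rw [cnt_zero, mem_coordSet]
    norm_num

lemma path_props (d : ℕ) (hd : 1 ≤ d) (t : ℕ) (x : Fin d → ℤ) (hx : x ∈ SF d t) :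
    gF d t x 0 = 0 ∧ gF d t x t = x ∧
      ∀ s < t, norm1 (gF d t x (s + 1) - gF d t x s) = 1 := by
  refine ⟨?_, ?_, ?_⟩
  · funext i
    simp [gF, cnt_zero, pOne]
  · funext i
    have hmem := mem_coordSet.1 (Fintype.mem_piFinset.1 hx i)
    exact pOne_last (x i) (cnt d i t) hmem.1 hmem.2.1 hmem.2.2
  · intro s hs
    have hd0 : 0 < d := hd
    set j : Fin d := ⟨s % d, Nat.mod_lt s hd0⟩ with hj
    have hstep : ∀ i : Fin d, |(gF d t x (s+1) - gF d t x s) i| = if i = j then 1 else 0 := by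
      intro i
      rcases eq_or_ne i j with heq | hne
      · have hiv : s % d = (i:ℕ) := by rw [heq]
        have hcs : cnt d (i:ℕ) (s+1) = cnt d (i:ℕ) s + 1 := by
          rw [cnt_succ, if_pos hiv]
        simp only [Pi.sub_apply, gF, hcs, if_pos heq]
        rcases pOne_step (x i) (cnt d (i:ℕ) t) (cnt d (i:ℕ) s) with h | h <;> rw [h] <;> simp
      · have hcs : cnt d (i:ℕ) (s+1) = cnt d (i:ℕ) s := by
          rw [cnt_succ]
          have : ¬ (s % d = (i:ℕ)) := by
            intro hcon
            apply hne
            apply Fin.ext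
            simp [hj, hcon]
          simp [this]
        simp only [Pi.sub_apply, gF, hcs, if_neg hne]
        simp
    rw [norm1, Finset.sum_congr rfl (fun i _ => hstep i)]
    simp

set_option maxHeartbeats 1000000 in
lemma mult_bound (d : ℕ) (hd : 1 ≤ d) (t' : ℕ) (ht' : 1 ≤ t') (t : ℕ) (htt : t ≤ t')
    (x : Fin d → ℤ) :
    (((SF d t').filter (fun y => gF d t' y t = x)).card : ℝ)
      ≤ (4 + 4 * d) ^ d * ((t' : ℝ) / (1 + t)) ^ d := by
  have hsub : (SF d t').filter (fun y => gF d t' y t = x)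
      ⊆ Fintype.piFinset (fun i : Fin d => (coordSet (cnt d i t')).filter
          (fun z => pOne z (cnt d i t') (cnt d i t) = x i)) := by
    intro y hy
    obtain ⟨hy1, hy2⟩ := Finset.mem_filter.1 hy
    rw [SF, Fintype.mem_piFinset] at hy1
    rw [Fintype.mem_piFinset]
    intro i
    exact Finset.mem_filter.2 ⟨hy1 i, congrFun hy2 i⟩
  have h1 : ((SF d t').filter (fun y => gF d t' y t = x)).card
      ≤ ∏ i : Fin d, ((coordSet (cnt d i t')).filter
          (fun z => pOne z (cnt d i t') (cnt d i t) = x i)).card :=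
    le_trans (Finset.card_le_card hsub) (le_of_eq (Fintype.card_piFinset _))
  calc (((SF d t').filter (fun y => gF d t' y t = x)).card : ℝ)
      ≤ ∏ i : Fin d, (((coordSet (cnt d i t')).filter
          (fun z => pOne z (cnt d i t') (cnt d i t) = x i)).card : ℝ) := by
        exact_mod_cast h1
    _ ≤ ∏ _i : Fin d, ((4 + 4 * (d:ℝ)) * ((t' : ℝ) / (1 + t))) :=
        Finset.prod_le_prod (fun i _ => by positivity)
          (fun i _ => coord_real_bound d hd t t' ht' htt i (x i))
    _ = ((4 + 4 * (d:ℝ)) * ((t' : ℝ) / (1 + t))) ^ d := by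
        rw [Finset.prod_const, Finset.card_univ, Fintype.card_fin]
    _ = (4 + 4 * d) ^ d * ((t' : ℝ) / (1 + t)) ^ d := mul_pow _ _ d

lemma card_lower (d : ℕ) (hd : 1 ≤ d) (t : ℕ) :
    ((t : ℝ) + d) ^ d / (2 * d : ℝ) ^ d ≤ ((SF d t).card : ℝ) := by
  have hd0 : 0 < d := hd
  have hdR : (1:ℝ) ≤ (d:ℝ) := by exact_mod_cast hd
  have h2d : (0:ℝ) < 2*(d:ℝ) := by linarith
  have hfac : ∀ i : Fin d, ((t:ℝ) + d) / (2*d) ≤ (cnt d i t : ℝ) + 1 := by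
    intro i
    rw [div_le_iff₀ h2d]
    rcases le_or_gt t d with hcase | hcase
    · have : (t:ℝ) ≤ d := by exact_mod_cast hcase
      have hc0 : (0:ℝ) ≤ (cnt d i t : ℝ) := by positivity
      nlinarith
    · have hit : (i:ℕ) < t := lt_of_lt_of_le i.isLt (le_of_lt hcase)
      have hlow := cnt_lower d (i:ℕ) t hd0 i.isLt hit
      have hl2 : t + 1 ≤ d + d * cnt d (i:ℕ) t := by
        calc t + 1 ≤ ((i:ℕ) + d * cnt d (i:ℕ) t) + 1 := Nat.succ_le_succ hlow
          _ = ((i:ℕ)+1) + d * cnt d (i:ℕ) t := by ring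
          _ ≤ d + d * cnt d (i:ℕ) t := Nat.add_le_add_right i.isLt _
      have hlR : (t:ℝ) + 1 ≤ (d:ℝ) + (d:ℝ) * (cnt d (i:ℕ) t : ℝ) := by exact_mod_cast hl2
      have htR : (d:ℝ) < t := by exact_mod_cast hcase
      have hc0 : (0:ℝ) ≤ (d:ℝ) * (cnt d (i:ℕ) t : ℝ) := by positivity
      nlinarith
  calc ((t : ℝ) + d) ^ d / (2 * d : ℝ) ^ d = (((t:ℝ) + d) / (2*d)) ^ d := (div_pow _ _ d).symm
    _ = ∏ _i : Fin d, (((t:ℝ) + d) / (2*d)) := by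
        rw [Finset.prod_const, Finset.card_univ, Fintype.card_fin]
    _ ≤ ∏ i : Fin d, ((cnt d i t : ℝ) + 1) := by
        refine Finset.prod_le_prod (fun i _ => by positivity) (fun i _ => hfac i)
    _ = ((SF d t).card : ℝ) := by
        rw [SF_card]
        push_cast
        rfl

set_option maxHeartbeats 1000000 in
lemma ratio_bound (d : ℕ) (hd : 1 ≤ d) (t t' : ℕ) (ht : 1 ≤ t) (htt' : t ≤ t')
    (x : Fin d → ℤ) :
    (((SF d t').filter (fun y => gF d t' y t = x)).card : ℝ) / ((SF d t').card : ℝ)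
      ≤ (4 * d : ℝ) ^ (2 * d) / (1 + (t : ℝ)) ^ d := by
  have hdR : (1:ℝ) ≤ (d:ℝ) := by exact_mod_cast hd
  have ht' : 1 ≤ t' := le_trans ht htt'
  have ht'R : (1:ℝ) ≤ (t':ℝ) := by exact_mod_cast ht'
  have hn := mult_bound d hd t' ht' t htt' x
  have hS := card_lower d hd t'
  set n := (((SF d t').filter (fun y => gF d t' y t = x)).card : ℝ) with hn'
  set N := ((SF d t').card : ℝ) with hN'
  have htd : (0:ℝ) < (t':ℝ) + d := by linarith
  have h2d : (0:ℝ) < 2*(d:ℝ) := by linarith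
  have h1t : (0:ℝ) < 1 + (t:ℝ) := by positivity
  have hp2d : (0:ℝ) < (2*(d:ℝ))^d := pow_pos h2d d
  have hNpos : (0:ℝ) < N := lt_of_lt_of_le (div_pos (pow_pos htd d) hp2d) hS
  have hptd : (0:ℝ) < (1 + (t:ℝ))^d := pow_pos h1t d
  rw [div_le_div_iff₀ hNpos hptd]
  -- goal : n * (1+t)^d ≤ (4d)^(2d) * N
  have h2 : n * (1+(t:ℝ))^d ≤ (4 + 4*(d:ℝ))^d * (t':ℝ)^d := by
    calc n * (1+(t:ℝ))^d
        ≤ ((4 + 4*(d:ℝ))^d * ((t':ℝ)/(1+t))^d) * (1+(t:ℝ))^d :=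
          mul_le_mul_of_nonneg_right hn (by positivity)
      _ = (4 + 4*(d:ℝ))^d * (((t':ℝ)/(1+t))^d * (1+(t:ℝ))^d) := by ring
      _ = (4 + 4*(d:ℝ))^d * (t':ℝ)^d := by
          rw [← mul_pow, div_mul_cancel₀ _ h1t.ne']
  have hS' : ((t':ℝ)+d)^d ≤ N * (2*(d:ℝ))^d := by
    rw [div_le_iff₀ hp2d] at hS
    exact hS
  have hbase : (4+4*(d:ℝ)) * t' * (2*d) ≤ 16*(d:ℝ)^2*((t':ℝ)+d) := by
    nlinarith [mul_nonneg (mul_nonneg (by linarith : (0:ℝ) ≤ (d:ℝ)-1)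
      (by positivity : (0:ℝ) ≤ (d:ℝ))) (by positivity : (0:ℝ) ≤ (t':ℝ)),
      pow_nonneg (by positivity : (0:ℝ) ≤ (d:ℝ)) 3]
  have h3 : ((4+4*(d:ℝ)) * t' * (2*d))^d ≤ (16*(d:ℝ)^2*((t':ℝ)+d))^d :=
    pow_le_pow_left₀ (by positivity) hbase d
  have e1 : ((4*(d:ℝ)))^(2*d) = (16*(d:ℝ)^2)^d := by
    rw [pow_mul]
    congr 1
    ring
  have h4 : n * (1+(t:ℝ))^d * (2*(d:ℝ))^d ≤ ((4*(d:ℝ))^(2*d) * N) * (2*(d:ℝ))^d := by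
    calc n * (1+(t:ℝ))^d * (2*(d:ℝ))^d
        ≤ ((4 + 4*(d:ℝ))^d * (t':ℝ)^d) * (2*(d:ℝ))^d :=
          mul_le_mul_of_nonneg_right h2 (by positivity)
      _ = ((4+4*(d:ℝ)) * t' * (2*d))^d := by rw [← mul_pow, ← mul_pow]
      _ ≤ (16*(d:ℝ)^2*((t':ℝ)+d))^d := h3
      _ = (16*(d:ℝ)^2)^d * (((t':ℝ)+d))^d := mul_pow _ _ d
      _ ≤ (16*(d:ℝ)^2)^d * (N * (2*(d:ℝ))^d) := by
          apply mul_le_mul_of_nonneg_left hS' (by positivity)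
      _ = ((4*(d:ℝ))^(2*d) * N) * (2*(d:ℝ))^d := by rw [e1]; ring
  exact le_of_mul_le_mul_right h4 hp2d

end PFaux

/-- Lemma 2.2: a combinatorial family of lattice paths from the origin whose
visit multiplicities are uniformly controlled. -/
theorem path_family_exists (d : ℕ) (hd : 1 ≤ d) :
    ∃ (S : ℕ → Finset (Fin d → ℤ)) (g : ℕ → (Fin d → ℤ) → ℕ → (Fin d → ℤ)),
      S 0 = {0} ∧
      (∀ t : ℕ, ∀ x ∈ S t,
        g t x 0 = 0 ∧ g t x t = x ∧ ∀ s < t, norm1 (g t x (s + 1) - g t x s) = 1) ∧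
      (∀ t' : ℕ, 1 ≤ t' → ∀ t ≤ t', ∀ x : Fin d → ℤ,
        (((S t').filter (fun y => g t' y t = x)).card : ℝ)
          ≤ (4 + 4 * d) ^ d * ((t' : ℝ) / (1 + t)) ^ d) ∧
      (∀ t : ℕ, ((t : ℝ) + d) ^ d / (2 * d : ℝ) ^ d ≤ ((S t).card : ℝ)) ∧
      (∀ t t' : ℕ, 1 ≤ t → t ≤ t' → ∀ x : Fin d → ℤ,
        (((S t').filter (fun y => g t' y t = x)).card : ℝ) / ((S t').card : ℝ)
          ≤ (4 * d : ℝ) ^ (2 * d) / (1 + (t : ℝ)) ^ d) := by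
  refine ⟨fun t => PFaux.SF d t, fun t' y s => PFaux.gF d t' y s, PFaux.SF_zero d, ?_, ?_, ?_, ?_⟩
  · intro t x hx
    exact PFaux.path_props d hd t x hx
  · intro t' ht' t htt x
    exact PFaux.mult_bound d hd t' ht' t htt x
  · intro t
    exact PFaux.card_lower d hd t
  · intro t t' ht htt' x
    exact PFaux.ratio_bound d hd t t' ht htt' x
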